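/- arXiv:1603.04893 — 5 statements merged into one kernel-verified Lean document; each statement's English description precedes it below -/
import Mathlib

section
/- If γ is additionally nondecreasing in the setting of the previous theorem, then any group Nash equilibrium S satisfies γ(S) ≥ (1/2)γ(Ω), where Ω is the optimal group action sequence. -/
/-!
Test each group `i` against the deviation from `s i` to `σ i`. Validity (i), the Nash condition
and diminishing returns bound the marginal gain `γ(S ∪ σ i) - γ(S)` by `η i s`. Submodularity
sums these gains to dominate `γ(S ∪ Ω) - γ(S)`, which is at least `γ(Ω) - γ(S)` by monotonicity,
while validity (ii) bounds `∑ i, η i s` by `γ(S)`. Hence `γ(Ω) ≤ 2 γ(S)`.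
-/

open Finset

namespace Finset

theorem univ_biUnion_update {ι α : Type*} [Fintype ι] [DecidableEq ι] [DecidableEq α]
    (f : ι → Finset α) (i : ι) (x : Finset α) :
    univ.biUnion (Function.update f i x) = (univ.erase i).biUnion f ∪ x := by
  conv_lhs => rw [← insert_erase (mem_univ i)]
  rw [biUnion_insert, Function.update_self, union_comm]
  congr 1
  exact biUnion_congr rfl fun j hj => Function.update_of_ne (ne_of_mem_erase hj) _ _

end Finset

section Submodular

variable {α : Type*} [DecidableEq α] {γ : Finset α → ℝ}

theorem marginal_le_marginal_of_subset
    (hsub : ∀ A B : Finset α, γ (A ∪ B) + γ (A ∩ B) ≤ γ A + γ B) (hmono : Monotone γ)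
    {R S : Finset α} (X : Finset α) (hRS : R ⊆ S) :
    γ (S ∪ X) - γ S ≤ γ (R ∪ X) - γ R := by
  have hunion : S ∪ (R ∪ X) = S ∪ X := by
    rw [← union_assoc, union_eq_left.mpr hRS]
  have hinter : R ⊆ S ∩ (R ∪ X) := subset_inter hRS subset_union_left
  have := hsub S (R ∪ X)
  rw [hunion] at this
  linarith [hmono hinter]

theorem marginal_biUnion_le_sum_marginal
    (hsub : ∀ A B : Finset α, γ (A ∪ B) + γ (A ∩ B) ≤ γ A + γ B) (hmono : Monotone γ)
    {ι : Type*} [DecidableEq ι] (S : Finset α) (T : Finset ι) (σ : ι → Finset α) :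
    γ (S ∪ T.biUnion σ) - γ S ≤ ∑ i ∈ T, (γ (S ∪ σ i) - γ S) := by
  induction T using Finset.induction_on with
  | empty => simp
  | insert a T ha ih =>
    have hunion : S ∪ (insert a T).biUnion σ = (S ∪ T.biUnion σ) ∪ (S ∪ σ a) := by
      rw [biUnion_insert]
      ext x
      simp only [mem_union]
      tauto
    have hinter : S ⊆ (S ∪ T.biUnion σ) ∩ (S ∪ σ a) :=
      subset_inter subset_union_left subset_union_left
    have := hsub (S ∪ T.biUnion σ) (S ∪ σ a)
    rw [sum_insert ha, hunion]
    linarith [hmono hinter]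

end Submodular

theorem group_nash_half_value_general {V : Type*} [DecidableEq V]
    (γ : Finset V → ℝ)
    (hsub : ∀ A B : Finset V, γ (A ∪ B) + γ (A ∩ B) ≤ γ A + γ B)
    (l : ℕ) (𝒳 : Fin l → Set (Finset V))
    -- the groups' action spaces come from disjoint ground sets
    (hdisj : ∀ i j : Fin l, i ≠ j → ∀ x ∈ 𝒳 i, ∀ y ∈ 𝒳 j, Disjoint x y)
    (η : Fin l → (Fin l → Finset V) → ℝ)
    -- validity (i): each group's utility is at least its marginal contribution
    (hvalid1 : ∀ t : Fin l → Finset V, (∀ i, t i ∈ 𝒳 i) → ∀ i : Fin l,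
      γ (Finset.univ.biUnion t) - γ (Finset.univ.biUnion t \ t i) ≤ η i t)
    -- validity (ii): the group utilities sum to at most the social utility
    (hvalid2 : ∀ t : Fin l → Finset V, (∀ i, t i ∈ 𝒳 i) →
      ∑ i : Fin l, η i t ≤ γ (Finset.univ.biUnion t))
    (s σ : Fin l → Finset V)
    (hs : ∀ i, s i ∈ 𝒳 i) (hσ : ∀ i, σ i ∈ 𝒳 i)
    -- s is a group Nash equilibrium: no group gains by unilateral deviation
    (hnash : ∀ (i : Fin l), ∀ t' ∈ 𝒳 i, η i (Function.update s i t') ≤ η i s)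
    -- γ is additionally nondecreasing (with γ ∅ ≥ 0)
    (hmono : ∀ A B : Finset V, A ⊆ B → γ A ≤ γ B) :
    (1 / 2) * γ (Finset.univ.biUnion σ) ≤ γ (Finset.univ.biUnion s) := by
  have hmono : Monotone γ := fun A B => hmono A B
  set S := univ.biUnion s
  have hgain : ∀ i, γ (S ∪ σ i) - γ S ≤ η i s := by
    intro i
    set R := (univ.erase i).biUnion s
    have hdev : ∀ j, Function.update s i (σ i) j ∈ 𝒳 j :=
      (Function.forall_update_iff s (p := fun j t => t ∈ 𝒳 j)).mpr ⟨hσ i, fun j _ => hs j⟩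
    have hRσ : Disjoint R (σ i) := (disjoint_biUnion_left _ _ _).mpr fun j hj =>
      hdisj j i (ne_of_mem_erase hj) _ (hs j) _ (hσ i)
    have hvalid := hvalid1 _ hdev i
    rw [univ_biUnion_update, Function.update_self, union_sdiff_cancel_right hRσ] at hvalid
    have hRS : R ⊆ S := biUnion_subset_biUnion_of_subset_left s (erase_subset i univ)
    linarith [marginal_le_marginal_of_subset hsub hmono (σ i) hRS, hnash i (σ i) (hσ i)]
  have hsum := marginal_biUnion_le_sum_marginal hsub hmono S univ σ
  have hΩ : γ (univ.biUnion σ) ≤ γ (S ∪ univ.biUnion σ) := hmono subset_union_right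
  linarith [sum_le_sum fun i (_ : i ∈ univ) => hgain i, hvalid2 s hs]

/-- Vetta's 1/2 bound, pure-strategy group version: for a valid utility system
`(γ, {η i})` with `γ` submodular, if `γ` is additionally nondecreasing, any group Nash equilibrium `S` satisfies `γ(S) ≥ (1/2) γ(Ω)`. -/
theorem group_nash_half_value {V : Type*} [DecidableEq V]
    (γ : Finset V → ℝ)
    (hsub : ∀ A B : Finset V, γ (A ∪ B) + γ (A ∩ B) ≤ γ A + γ B)
    (l : ℕ) (𝒳 : Fin l → Set (Finset V))
    -- the groups' action spaces come from disjoint ground sets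
    (hdisj : ∀ i j : Fin l, i ≠ j → ∀ x ∈ 𝒳 i, ∀ y ∈ 𝒳 j, Disjoint x y)
    (η : Fin l → (Fin l → Finset V) → ℝ)
    -- validity (i): each group's utility is at least its marginal contribution
    (hvalid1 : ∀ t : Fin l → Finset V, (∀ i, t i ∈ 𝒳 i) → ∀ i : Fin l,
      γ (Finset.univ.biUnion t) - γ (Finset.univ.biUnion t \ t i) ≤ η i t)
    -- validity (ii): the group utilities sum to at most the social utility
    (hvalid2 : ∀ t : Fin l → Finset V, (∀ i, t i ∈ 𝒳 i) →
      ∑ i : Fin l, η i t ≤ γ (Finset.univ.biUnion t))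
    (s σ : Fin l → Finset V)
    (hs : ∀ i, s i ∈ 𝒳 i) (hσ : ∀ i, σ i ∈ 𝒳 i)
    -- Ω = ∪ σ i is an optimal (feasible) group action sequence
    (hopt : ∀ t : Fin l → Finset V, (∀ i, t i ∈ 𝒳 i) →
      γ (Finset.univ.biUnion t) ≤ γ (Finset.univ.biUnion σ))
    -- s is a group Nash equilibrium: no group gains by unilateral deviation
    (hnash : ∀ (i : Fin l), ∀ t' ∈ 𝒳 i, η i (Function.update s i t') ≤ η i s)
    -- γ is additionally nondecreasing (with γ ∅ ≥ 0)
    (hmono : ∀ A B : Finset V, A ⊆ B → γ A ≤ γ B)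
    (h0 : 0 ≤ γ ∅) :
    (1 / 2) * γ (Finset.univ.biUnion σ) ≤ γ (Finset.univ.biUnion s) :=
  group_nash_half_value_general γ hsub l 𝒳 hdisj η hvalid1 hvalid2 s σ hs hσ hnash hmono
end

section
/- (Curvature-based bound for group Nash equilibria.) For a valid utility system (γ, {η_i}_{i=1}^l) with γ nondecreasing, submodular, and γ(∅) = 0, any group Nash equilibrium S satisfies γ(S) ≥ γ(Ω)/(1 + max_{1≤i≤l} c_{k_i}), where c_{k_i} = max over feasible group actions with γ(s^i) ≠ 0 of (1 - [γ(Ω ∪ S) - γ(Ω ∪ (S∖s^i))]/γ(s^i)). -/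
/-!
Write `S` for the equilibrium union and `Ω` for the optimal one. When group `i` deviates to its part
`σ i` of `Ω`, validity and the Nash condition bound the marginal value of `σ i` over the other
groups' actions by `η i s`; by submodularity these marginals dominate `γ (Ω ∪ S) - γ S`, and the
utilities sum to at most `γ S`, so `γ (Ω ∪ S) ≤ 2 γ S`.

Conversely, the loss from removing group `i` from `Ω ∪ S` is at least `(1 - c) γ (s i)` by the
definition of the curvature `c`, while submodularity makes these losses sum to at most
`γ (Ω ∪ S) - γ Ω`. With subadditivity `γ S ≤ ∑ γ (s i)` this gives
`γ Ω + (1 - c) γ S ≤ γ (Ω ∪ S)`, and together `γ Ω ≤ (1 + c) γ S`.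
-/

open Finset

theorem one_sub_mul_le_of_one_sub_div_le {m g κ : ℝ} (hm : 0 ≤ m) (hg : 0 ≤ g)
    (h : 1 - m / g ≤ κ) : (1 - κ) * g ≤ m := by
  rcases hg.eq_or_lt with rfl | hg
  · simpa using hm
  · rw [← le_div_iff₀ hg]
    linarith

theorem nonneg_of_monotone {V : Type*} {γ : Finset V → ℝ} (hmono : Monotone γ) (h0 : γ ∅ = 0)
    (A : Finset V) : 0 ≤ γ A :=
  h0 ▸ hmono (empty_subset A)

section Submodular

variable {V ι : Type*} [DecidableEq V] [DecidableEq ι] {γ : Finset V → ℝ}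
  (hsub : ∀ A B : Finset V, γ (A ∪ B) + γ (A ∩ B) ≤ γ A + γ B) (hmono : Monotone γ)
include hsub hmono

theorem marginal_le_of_subset {X Y : Finset V} (hXY : X ⊆ Y) (A : Finset V) :
    γ (Y ∪ A) - γ Y ≤ γ (X ∪ A) - γ X := by
  have hunion : Y ∪ (X ∪ A) = Y ∪ A := by rw [← union_assoc, union_eq_left.mpr hXY]
  have hinter : γ X ≤ γ (Y ∩ (X ∪ A)) := hmono (subset_inter hXY subset_union_left)
  have hsubmod := hsub Y (X ∪ A)
  rw [hunion] at hsubmod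
  linarith

theorem marginal_sdiff_le (h0 : γ ∅ = 0) (A : Finset V) {X T : Finset V} (hXT : X ⊆ T) :
    γ (A ∪ T) - γ (A ∪ (T \ X)) ≤ γ X := by
  have hunion : A ∪ (T \ X) ∪ X = A ∪ T := by
    rw [union_assoc, sdiff_union_self_eq_union, union_eq_left.mpr hXT]
  simpa [hunion, h0] using marginal_le_of_subset hsub hmono (empty_subset (A ∪ (T \ X))) X

theorem biUnion_le_sum (h0 : γ ∅ = 0) (T : Finset ι) (f : ι → Finset V) :
    γ (T.biUnion f) ≤ ∑ i ∈ T, γ (f i) := by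
  induction T using Finset.induction_on with
  | empty => simp [h0]
  | insert a T ha ih =>
    rw [biUnion_insert, sum_insert ha]
    linarith [hsub (f a) (T.biUnion f), nonneg_of_monotone hmono h0 (f a ∩ T.biUnion f)]

theorem marginal_biUnion_le_sum (B : Finset V) (T : Finset ι) (f : ι → Finset V) :
    γ (B ∪ T.biUnion f) - γ B ≤ ∑ i ∈ T, (γ (B ∪ f i) - γ B) := by
  induction T using Finset.induction_on with
  | empty => simp
  | insert a T ha ih =>
    rw [biUnion_insert, sum_insert ha]
    have hstep : γ (B ∪ T.biUnion f ∪ f a) - γ (B ∪ T.biUnion f) ≤ γ (B ∪ f a) - γ B :=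
      marginal_le_of_subset hsub hmono subset_union_left (f a)
    rw [union_right_comm, union_assoc] at hstep
    linarith

theorem sum_marginal_erase_le (B : Finset V) (T : Finset ι) (f : ι → Finset V) :
    ∑ i ∈ T, (γ (B ∪ T.biUnion f) - γ (B ∪ (T.erase i).biUnion f)) ≤
      γ (B ∪ T.biUnion f) - γ B := by
  induction T using Finset.induction_on with
  | empty => simp
  | insert a T ha ih =>
    rw [sum_insert ha, erase_insert ha]
    have hle : ∀ i ∈ T,
        γ (B ∪ (insert a T).biUnion f) - γ (B ∪ ((insert a T).erase i).biUnion f) ≤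
          γ (B ∪ T.biUnion f) - γ (B ∪ (T.erase i).biUnion f) := by
      intro i hi
      have hai : a ≠ i := fun h => ha (h ▸ hi)
      have hfill : (T.erase i).biUnion f ∪ f i = T.biUnion f := by
        rw [union_comm, ← biUnion_insert, insert_erase hi]
      have := marginal_le_of_subset hsub hmono
        (union_subset_union_right subset_union_right :
          B ∪ (T.erase i).biUnion f ⊆ B ∪ (f a ∪ (T.erase i).biUnion f)) (f i)
      simp only [union_assoc, hfill] at this
      rwa [biUnion_insert, erase_insert_of_ne hai, biUnion_insert]
    linarith [sum_le_sum hle]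

theorem add_one_sub_mul_le_of_le_marginal (h0 : γ ∅ = 0) {κ : ℝ} (hκ : κ ≤ 1)
    (B : Finset V) (T : Finset ι) (f : ι → Finset V)
    (hf : ∀ i ∈ T, (1 - κ) * γ (f i) ≤ γ (B ∪ T.biUnion f) - γ (B ∪ (T.erase i).biUnion f)) :
    γ B + (1 - κ) * γ (T.biUnion f) ≤ γ (B ∪ T.biUnion f) := by
  have hsum : (1 - κ) * γ (T.biUnion f) ≤ γ (B ∪ T.biUnion f) - γ B :=
    calc (1 - κ) * γ (T.biUnion f)
        ≤ (1 - κ) * ∑ i ∈ T, γ (f i) :=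
          mul_le_mul_of_nonneg_left (biUnion_le_sum hsub hmono h0 T f) (by linarith)
      _ = ∑ i ∈ T, (1 - κ) * γ (f i) := mul_sum _ _ _
      _ ≤ ∑ i ∈ T, (γ (B ∪ T.biUnion f) - γ (B ∪ (T.erase i).biUnion f)) := sum_le_sum hf
      _ ≤ γ (B ∪ T.biUnion f) - γ B := sum_marginal_erase_le hsub hmono B T f
  linarith

end Submodular

theorem biUnion_update {V ι : Type*} [DecidableEq V] [DecidableEq ι] [Fintype ι]
    (s : ι → Finset V) (i : ι) (x : Finset V) :
    univ.biUnion (Function.update s i x) = x ∪ (univ.erase i).biUnion s := by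
  have huniv : (univ : Finset ι) = insert i (univ.erase i) := (insert_erase (mem_univ i)).symm
  rw [huniv, biUnion_insert, Function.update_self, erase_insert (notMem_erase i univ)]
  congr 1
  exact biUnion_congr rfl fun j hj => Function.update_of_ne (ne_of_mem_erase hj) _ _

theorem biUnion_sdiff_of_disjoint {V ι : Type*} [DecidableEq V] [DecidableEq ι]
    {T : Finset ι} {f : ι → Finset V} {i : ι} (hi : i ∈ T)
    (hf : ∀ j ∈ T, j ≠ i → Disjoint (f j) (f i)) :
    T.biUnion f \ f i = (T.erase i).biUnion f := by
  nth_rw 1 [← insert_erase hi]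
  rw [biUnion_insert, union_sdiff_left, sdiff_eq_self_of_disjoint]
  exact (disjoint_biUnion_left _ _ _).2 fun j hj => hf j (mem_of_mem_erase hj) (ne_of_mem_erase hj)

section Game

variable {V ι : Type*} [DecidableEq V] [Fintype ι] {γ : Finset V → ℝ}
  {𝒳 : ι → Set (Finset V)}

/-- The values whose maximum is the group curvature `c_{k_i}` of group `i` relative to `Ω`. -/
def groupCurvatureRatios (γ : Finset V → ℝ) (𝒳 : ι → Set (Finset V)) (Ω : Finset V) (i : ι) :
    Set ℝ :=
  {r | ∃ t : ι → Finset V, (∀ j, t j ∈ 𝒳 j) ∧ γ (t i) ≠ 0 ∧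
    r = 1 - (γ (Ω ∪ univ.biUnion t) - γ (Ω ∪ (univ.biUnion t \ t i))) / γ (t i)}

theorem union_le_two_mul_of_isNash [DecidableEq ι]
    (hsub : ∀ A B : Finset V, γ (A ∪ B) + γ (A ∩ B) ≤ γ A + γ B) (hmono : Monotone γ)
    {η : ι → (ι → Finset V) → ℝ}
    (hvalid1 : ∀ t : ι → Finset V, (∀ i, t i ∈ 𝒳 i) → ∀ i : ι,
      γ (univ.biUnion t) - γ (univ.biUnion t \ t i) ≤ η i t)
    (hvalid2 : ∀ t : ι → Finset V, (∀ i, t i ∈ 𝒳 i) → ∑ i, η i t ≤ γ (univ.biUnion t))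
    {s σ : ι → Finset V} (hs : ∀ i, s i ∈ 𝒳 i) (hσ : ∀ i, σ i ∈ 𝒳 i)
    (hnash : ∀ i, ∀ t' ∈ 𝒳 i, η i (Function.update s i t') ≤ η i s) :
    γ (univ.biUnion σ ∪ univ.biUnion s) ≤ 2 * γ (univ.biUnion s) := by
  set S := univ.biUnion s
  have hdeviation : ∀ i, γ (S ∪ σ i) - γ S ≤ η i s := by
    intro i
    set R := (univ.erase i).biUnion s
    have hfeasible : ∀ j, Function.update s i (σ i) j ∈ 𝒳 j :=
      Function.forall_update_iff _ (p := fun j x => x ∈ 𝒳 j) |>.2 ⟨hσ i, fun j _ => hs j⟩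
    have hvalid := hvalid1 _ hfeasible i
    rw [biUnion_update, Function.update_self] at hvalid
    have hRS : R ⊆ S := biUnion_subset_biUnion_of_subset_left s (erase_subset i univ)
    have hrest : γ ((σ i ∪ R) \ σ i) ≤ γ R := hmono (by rw [union_sdiff_left]; exact sdiff_subset)
    have hmarginal := marginal_le_of_subset hsub hmono hRS (σ i)
    rw [union_comm R] at hmarginal
    linarith [hnash i (σ i) (hσ i)]
  calc γ (univ.biUnion σ ∪ S)
      = γ (S ∪ univ.biUnion σ) - γ S + γ S := by rw [union_comm]; ring
    _ ≤ ∑ i, (γ (S ∪ σ i) - γ S) + γ S := by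
      gcongr; exact marginal_biUnion_le_sum hsub hmono S univ σ
    _ ≤ ∑ i, η i s + γ S := by gcongr with i; exact hdeviation i
    _ ≤ 2 * γ S := by linarith [hvalid2 s hs]

variable (hmono : Monotone γ) (h0 : γ ∅ = 0)
include hmono h0

theorem mem_Icc_of_mem_groupCurvatureRatios
    (hsub : ∀ A B : Finset V, γ (A ∪ B) + γ (A ∩ B) ≤ γ A + γ B) {Ω : Finset V} {i : ι} {r : ℝ}
    (hr : r ∈ groupCurvatureRatios γ 𝒳 Ω i) : r ∈ Set.Icc (0 : ℝ) 1 := by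
  obtain ⟨t, -, -, rfl⟩ := hr
  have hsubset : t i ⊆ univ.biUnion t := subset_biUnion_of_mem t (mem_univ i)
  have hmarg_nonneg : 0 ≤ γ (Ω ∪ univ.biUnion t) - γ (Ω ∪ (univ.biUnion t \ t i)) :=
    sub_nonneg.2 (hmono (union_subset_union_right sdiff_subset))
  have hratio_le : (γ (Ω ∪ univ.biUnion t) - γ (Ω ∪ (univ.biUnion t \ t i))) / γ (t i) ≤ 1 :=
    div_le_one_of_le₀ (marginal_sdiff_le hsub hmono h0 Ω hsubset) (nonneg_of_monotone hmono h0 _)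
  constructor <;> linarith [div_nonneg hmarg_nonneg (nonneg_of_monotone hmono h0 (t i))]

theorem one_sub_mul_le_marginal {Ω : Finset V} {i : ι} {κ : ℝ}
    (hκ : ∀ r ∈ groupCurvatureRatios γ 𝒳 Ω i, r ≤ κ) {t : ι → Finset V} (ht : ∀ j, t j ∈ 𝒳 j) :
    (1 - κ) * γ (t i) ≤ γ (Ω ∪ univ.biUnion t) - γ (Ω ∪ (univ.biUnion t \ t i)) := by
  have hmarg_nonneg : 0 ≤ γ (Ω ∪ univ.biUnion t) - γ (Ω ∪ (univ.biUnion t \ t i)) :=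
    sub_nonneg.2 (hmono (union_subset_union_right sdiff_subset))
  rcases eq_or_ne (γ (t i)) 0 with hzero | hne
  · simpa [hzero] using hmarg_nonneg
  · exact one_sub_mul_le_of_one_sub_div_le hmarg_nonneg (nonneg_of_monotone hmono h0 _)
      (hκ _ ⟨t, ht, hne, rfl⟩)

end Game

theorem group_nash_curvature_bound_general {V : Type*} [DecidableEq V]
    (γ : Finset V → ℝ)
    (hsub : ∀ A B : Finset V, γ (A ∪ B) + γ (A ∩ B) ≤ γ A + γ B)
    (l : ℕ) (𝒳 : Fin l → Set (Finset V))
    -- the groups' action spaces come from disjoint ground sets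
    (hdisj : ∀ i j : Fin l, i ≠ j → ∀ x ∈ 𝒳 i, ∀ y ∈ 𝒳 j, Disjoint x y)
    (η : Fin l → (Fin l → Finset V) → ℝ)
    -- validity (i): each group's utility is at least its marginal contribution
    (hvalid1 : ∀ t : Fin l → Finset V, (∀ i, t i ∈ 𝒳 i) → ∀ i : Fin l,
      γ (Finset.univ.biUnion t) - γ (Finset.univ.biUnion t \ t i) ≤ η i t)
    -- validity (ii): the group utilities sum to at most the social utility
    (hvalid2 : ∀ t : Fin l → Finset V, (∀ i, t i ∈ 𝒳 i) →
      ∑ i : Fin l, η i t ≤ γ (Finset.univ.biUnion t))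
    (s σ : Fin l → Finset V)
    (hs : ∀ i, s i ∈ 𝒳 i) (hσ : ∀ i, σ i ∈ 𝒳 i)
    -- s is a group Nash equilibrium: no group gains by unilateral deviation
    (hnash : ∀ (i : Fin l), ∀ t' ∈ 𝒳 i, η i (Function.update s i t') ≤ η i s)
    -- γ is additionally nondecreasing (with γ ∅ ≥ 0)
    (hmono : ∀ A B : Finset V, A ⊆ B → γ A ≤ γ B)
    (h0 : γ ∅ = 0)
    -- `c i` is the group curvature of group `i`, the max over feasible
    -- configurations `t` with `γ (t i) ≠ 0` of
    -- `1 - (γ (Ω ∪ S t) - γ (Ω ∪ (S t \ t i))) / γ (t i)`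
    (c : Fin l → ℝ)
    (hc : ∀ i : Fin l, IsGreatest {r : ℝ | ∃ t : Fin l → Finset V,
      (∀ j, t j ∈ 𝒳 j) ∧ γ (t i) ≠ 0 ∧
      r = 1 - (γ (Finset.univ.biUnion σ ∪ Finset.univ.biUnion t)
        - γ (Finset.univ.biUnion σ ∪ (Finset.univ.biUnion t \ t i))) / γ (t i)} (c i))
    (cmax : ℝ)
    (hcmax : IsGreatest {r : ℝ | ∃ i : Fin l, r = c i} cmax) :
    γ (Finset.univ.biUnion σ) / (1 + cmax) ≤ γ (Finset.univ.biUnion s) := by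
  have hmono' : Monotone γ := fun A B h => hmono A B h
  obtain ⟨⟨i₀, rfl⟩, hc_le⟩ := hcmax
  have hc_mem : c i₀ ∈ Set.Icc (0 : ℝ) 1 :=
    mem_Icc_of_mem_groupCurvatureRatios hmono' h0 hsub (hc i₀).1
  have hmarginal : ∀ i ∈ univ, (1 - c i₀) * γ (s i) ≤ γ (univ.biUnion σ ∪ univ.biUnion s) -
      γ (univ.biUnion σ ∪ (univ.erase i).biUnion s) := by
    intro i _
    rw [← biUnion_sdiff_of_disjoint (mem_univ i)
      fun j _ hji => hdisj j i hji (s j) (hs j) (s i) (hs i)]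
    exact one_sub_mul_le_marginal hmono' h0 (fun r hr => ((hc i).2 hr).trans (hc_le ⟨i, rfl⟩)) hs
  have hcurvature := add_one_sub_mul_le_of_le_marginal hsub hmono' h0 hc_mem.2 _ univ s hmarginal
  have hnash' := union_le_two_mul_of_isNash hsub hmono' hvalid1 hvalid2 hs hσ hnash
  rw [div_le_iff₀ (by linarith [hc_mem.1])]
  linarith

/-- Vetta's 1/2 bound, pure-strategy group version: for a valid utility system
`(γ, {η i})` with `γ` submodular, curvature-based bound: with `γ` nondecreasing, submodular and `γ ∅ = 0`,
any group Nash equilibrium `S` satisfies `γ(S) ≥ γ(Ω) / (1 + max_i c_{k_i})`,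
where `c_{k_i}` is the group curvature of group `i`. -/
theorem group_nash_curvature_bound {V : Type*} [DecidableEq V]
    (γ : Finset V → ℝ)
    (hsub : ∀ A B : Finset V, γ (A ∪ B) + γ (A ∩ B) ≤ γ A + γ B)
    (l : ℕ) (𝒳 : Fin l → Set (Finset V))
    -- the groups' action spaces come from disjoint ground sets
    (hdisj : ∀ i j : Fin l, i ≠ j → ∀ x ∈ 𝒳 i, ∀ y ∈ 𝒳 j, Disjoint x y)
    (η : Fin l → (Fin l → Finset V) → ℝ)
    -- validity (i): each group's utility is at least its marginal contribution
    (hvalid1 : ∀ t : Fin l → Finset V, (∀ i, t i ∈ 𝒳 i) → ∀ i : Fin l,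
      γ (Finset.univ.biUnion t) - γ (Finset.univ.biUnion t \ t i) ≤ η i t)
    -- validity (ii): the group utilities sum to at most the social utility
    (hvalid2 : ∀ t : Fin l → Finset V, (∀ i, t i ∈ 𝒳 i) →
      ∑ i : Fin l, η i t ≤ γ (Finset.univ.biUnion t))
    (s σ : Fin l → Finset V)
    (hs : ∀ i, s i ∈ 𝒳 i) (hσ : ∀ i, σ i ∈ 𝒳 i)
    -- Ω = ∪ σ i is an optimal (feasible) group action sequence
    (hopt : ∀ t : Fin l → Finset V, (∀ i, t i ∈ 𝒳 i) →
      γ (Finset.univ.biUnion t) ≤ γ (Finset.univ.biUnion σ))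
    -- s is a group Nash equilibrium: no group gains by unilateral deviation
    (hnash : ∀ (i : Fin l), ∀ t' ∈ 𝒳 i, η i (Function.update s i t') ≤ η i s)
    -- γ is additionally nondecreasing (with γ ∅ ≥ 0)
    (hmono : ∀ A B : Finset V, A ⊆ B → γ A ≤ γ B)
    (h0 : γ ∅ = 0)
    -- `c i` is the group curvature of group `i`, the max over feasible
    -- configurations `t` with `γ (t i) ≠ 0` of
    -- `1 - (γ (Ω ∪ S t) - γ (Ω ∪ (S t \ t i))) / γ (t i)`
    (c : Fin l → ℝ)
    (hc : ∀ i : Fin l, IsGreatest {r : ℝ | ∃ t : Fin l → Finset V,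
      (∀ j, t j ∈ 𝒳 j) ∧ γ (t i) ≠ 0 ∧
      r = 1 - (γ (Finset.univ.biUnion σ ∪ Finset.univ.biUnion t)
        - γ (Finset.univ.biUnion σ ∪ (Finset.univ.biUnion t \ t i))) / γ (t i)} (c i))
    (cmax : ℝ)
    (hcmax : IsGreatest {r : ℝ | ∃ i : Fin l, r = c i} cmax) :
    γ (Finset.univ.biUnion σ) / (1 + cmax) ≤ γ (Finset.univ.biUnion s) :=
  group_nash_curvature_bound_general γ hsub l 𝒳 hdisj η hvalid1 hvalid2 s σ hs hσ hnash hmono h0 c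
    hc cmax hcmax
end

section
/- In the database-assisted spectrum access game, the social utility γ(A) = -Σ_{i=1}^N [Σ_{m ∈ N_i^p} P_m d_{mi}^{-λ} 1{a_i = a_m} + ω_{a_i}^i] satisfies, for every user i, α_i(A) ≥ γ(A) - γ(A_{-i}), where A_{-i} is the assignment with user i removed; i.e., Assumption 1 (marginal-contribution validity) holds. -/
/-!
Splitting off user `i`, `γ(A) - γ(A_{-i}) = α_i(A) + ∑_{j ≠ i} (α_j(A) - α_j(A_{-i}))`.
Interference is a sum of nonnegative terms over the active users, so removing `i` can only
lower the interference felt by every other user `j`; each bracket is therefore `≤ 0`.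
-/

open Finset

/-- Interference experienced by user `i` from the active users in `T`
(in the database-assisted spectrum access game). -/
noncomputable def interference (N : ℕ) (P : Fin N → ℝ) (d : Fin N → Fin N → ℝ)
    (lam : ℝ) (Np : Fin N → Finset (Fin N)) (a : Fin N → ℕ)
    (T : Finset (Fin N)) (i : Fin N) : ℝ :=
  ∑ m ∈ Np i ∩ T, P m * d m i ^ (-lam) * (if a i = a m then 1 else 0)

/-- Private utility of user `i` when the set of active users is `T`. -/
noncomputable def privateUtility (N : ℕ) (P : Fin N → ℝ) (d : Fin N → Fin N → ℝ)
    (lam : ℝ) (Np : Fin N → Finset (Fin N)) (ω : Fin N → ℕ → ℝ) (a : Fin N → ℕ)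
    (T : Finset (Fin N)) (i : Fin N) : ℝ :=
  -(interference N P d lam Np a T i) - ω i (a i)

/-- Social utility when the set of active users is `T`: the sum of the private
utilities of active users, with all terms involving inactive users removed. -/
noncomputable def socialUtility (N : ℕ) (P : Fin N → ℝ) (d : Fin N → Fin N → ℝ)
    (lam : ℝ) (Np : Fin N → Finset (Fin N)) (ω : Fin N → ℕ → ℝ) (a : Fin N → ℕ)
    (T : Finset (Fin N)) : ℝ :=
  ∑ i ∈ T, privateUtility N P d lam Np ω a T i

section

variable {N : ℕ} {P : Fin N → ℝ} {d : Fin N → Fin N → ℝ} {lam : ℝ}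
  {Np : Fin N → Finset (Fin N)} {ω : Fin N → ℕ → ℝ} {a : Fin N → ℕ}

lemma interference_mono (hP : ∀ m, 0 ≤ P m) (hd : ∀ m i, 0 ≤ d m i)
    {S T : Finset (Fin N)} (hST : S ⊆ T) (i : Fin N) :
    interference N P d lam Np a S i ≤ interference N P d lam Np a T i :=
  sum_le_sum_of_subset_of_nonneg (inter_subset_inter_left hST) fun m _ _ =>
    mul_nonneg (mul_nonneg (hP m) (Real.rpow_nonneg (hd m i) _)) (by split_ifs <;> norm_num)

lemma privateUtility_anti (hP : ∀ m, 0 ≤ P m) (hd : ∀ m i, 0 ≤ d m i)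
    {S T : Finset (Fin N)} (hST : S ⊆ T) (i : Fin N) :
    privateUtility N P d lam Np ω a T i ≤ privateUtility N P d lam Np ω a S i :=
  sub_le_sub_right (neg_le_neg (interference_mono hP hd hST i)) _

lemma socialUtility_sub_socialUtility_sdiff_singleton_le (hP : ∀ m, 0 ≤ P m)
    (hd : ∀ m i, 0 ≤ d m i) {T : Finset (Fin N)} {i : Fin N} (hi : i ∈ T) :
    socialUtility N P d lam Np ω a T - socialUtility N P d lam Np ω a (T \ {i})
      ≤ privateUtility N P d lam Np ω a T i := by
  have hsplit : socialUtility N P d lam Np ω a T = privateUtility N P d lam Np ω a T i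
      + ∑ j ∈ T \ {i}, privateUtility N P d lam Np ω a T j :=
    sum_eq_add_sum_sdiff_singleton_of_mem hi _
  have hothers : ∑ j ∈ T \ {i}, privateUtility N P d lam Np ω a T j
      ≤ socialUtility N P d lam Np ω a (T \ {i}) :=
    sum_le_sum fun j _ => privateUtility_anti hP hd sdiff_subset j
  linarith

end

theorem spectrum_assumption1_general (N : ℕ) (P : Fin N → ℝ) (d : Fin N → Fin N → ℝ)
    (lam : ℝ) (Np : Fin N → Finset (Fin N)) (ω : Fin N → ℕ → ℝ) (a : Fin N → ℕ)
    (hP : ∀ m, 0 < P m) (hd : ∀ m i, 0 < d m i) :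
    ∀ i : Fin N,
      socialUtility N P d lam Np ω a Finset.univ
        - socialUtility N P d lam Np ω a (Finset.univ \ {i})
      ≤ privateUtility N P d lam Np ω a Finset.univ i := fun _ =>
  socialUtility_sub_socialUtility_sdiff_singleton_le (fun m => (hP m).le)
    (fun m i => (hd m i).le) (mem_univ _)

/-- Assumption 1 (marginal-contribution validity) for the spectrum access game:
for every user `i`, `α i A ≥ γ A - γ (A_{-i})`, where `A_{-i}` removes user `i`. -/
theorem spectrum_assumption1 (N : ℕ) (P : Fin N → ℝ) (d : Fin N → Fin N → ℝ)
    (lam : ℝ) (Np : Fin N → Finset (Fin N)) (ω : Fin N → ℕ → ℝ) (a : Fin N → ℕ)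
    (hP : ∀ m, 0 < P m) (hd : ∀ m i, 0 < d m i) (hlam : 0 < lam)
    (hω : ∀ i c, 0 ≤ ω i c) (hNp : ∀ i, i ∉ Np i) :
    ∀ i : Fin N,
      socialUtility N P d lam Np ω a Finset.univ
        - socialUtility N P d lam Np ω a (Finset.univ \ {i})
      ≤ privateUtility N P d lam Np ω a Finset.univ i :=
  spectrum_assumption1_general N P d lam Np ω a hP hd
end

section
/- In the spectrum access game, if all users have equal transmit power P and social ties are symmetric (w_{mn} = w_{nm}), and if for every user i and assignment A, Σ_{n ∈ N_i^s} w_{in} α_n(A) ≥ (min_{1≤j≤N} Σ_{m ∈ N_j^s} w_{jm}) α_i(A) - p Σ_{m ∈ N_i^p} P d_{mi}^{-λ} 1{a_i = a_m}, where p = min_j (1 + Σ_{m ∈ N_j^s} w_{jm}), then the social-group utility η_i(A) = α_i(A) + Σ_{n ∈ N_i^s} w_{in} α_n(A) satisfies η_i(A) ≥ γ(A) - γ(A_{-i}) with γ(A) = p Σ_{i=1}^N α_i(A). -/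
/-!
Removing user `i` changes the social utility by `α_i(A)` minus the interference that `i`
inflicts on the others; by the symmetry of distances and interference neighbourhoods (and
equal powers) that is exactly the interference `i` receives. Hence
`γ(A) - γ(A_{-i}) = p α_i(A) - p Σ_{m ∈ N_i^p} P d_{mi}^{-λ} 1{a_i = a_m}`, and writing
`p α_i = α_i + q α_i`, the hypothesis on `Σ_n w_{in} α_n` closes the inequality.
-/

open Finset

section RemoveUser

variable {N : ℕ} (P : Fin N → ℝ) (d : Fin N → Fin N → ℝ) (lam : ℝ)
  (Np : Fin N → Finset (Fin N)) (ω : Fin N → ℕ → ℝ) (a : Fin N → ℕ)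

theorem interference_erase {T : Finset (Fin N)} {i : Fin N} (hi : i ∈ T) (j : Fin N) :
    interference N P d lam Np a (T.erase i) j
      = interference N P d lam Np a T j
        - if i ∈ Np j then P i * d i j ^ (-lam) * (if a j = a i then 1 else 0) else 0 := by
  unfold interference
  rw [inter_erase]
  by_cases hij : i ∈ Np j
  · rw [if_pos hij, sum_erase_eq_sub (mem_inter.2 ⟨hij, hi⟩)]
  · rw [if_neg hij, erase_eq_of_notMem (fun h => hij (mem_inter.1 h).1), sub_zero]

theorem privateUtility_erase {T : Finset (Fin N)} {i : Fin N} (hi : i ∈ T) (j : Fin N) :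
    privateUtility N P d lam Np ω a (T.erase i) j
      = privateUtility N P d lam Np ω a T j
        + if i ∈ Np j then P i * d i j ^ (-lam) * (if a j = a i then 1 else 0) else 0 := by
  unfold privateUtility
  rw [interference_erase P d lam Np a hi]
  ring

theorem socialUtility_sub_socialUtility_erase (hNp : ∀ i, i ∉ Np i)
    (hNpsymm : ∀ m i, m ∈ Np i ↔ i ∈ Np m) (hdsymm : ∀ m i, d m i = d i m)
    {T : Finset (Fin N)} {i : Fin N} (hi : i ∈ T) :
    socialUtility N P d lam Np ω a T - socialUtility N P d lam Np ω a (T.erase i)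
      = privateUtility N P d lam Np ω a T i
        - ∑ m ∈ Np i ∩ T, P i * d m i ^ (-lam) * (if a i = a m then 1 else 0) := by
  have hvictims : (T.erase i).filter (fun j => i ∈ Np j) = Np i ∩ T := by
    ext j
    simp only [mem_filter, mem_erase, mem_inter, ← hNpsymm j i]
    exact ⟨fun ⟨⟨_, hj⟩, hi'⟩ => ⟨hi', hj⟩,
      fun ⟨hi', hj⟩ => ⟨⟨fun h => hNp i (h ▸ hi'), hj⟩, hi'⟩⟩
  have hinflicted : ∑ j ∈ T.erase i,
      (if i ∈ Np j then P i * d i j ^ (-lam) * (if a j = a i then 1 else 0) else 0)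
      = ∑ m ∈ Np i ∩ T, P i * d m i ^ (-lam) * (if a i = a m then 1 else 0) := by
    rw [← sum_filter, hvictims]
    refine sum_congr rfl fun m _ => ?_
    simp only [hdsymm i m, eq_comm]
  unfold socialUtility
  rw [← add_sum_erase T _ hi, sum_congr rfl fun j _ => privateUtility_erase P d lam Np ω a hi j,
    sum_add_distrib, hinflicted]
  ring

end RemoveUser

theorem spectrum_social_aware_assumption_general (N : ℕ) (P : ℝ) (d : Fin N → Fin N → ℝ)
    (lam : ℝ) (Np : Fin N → Finset (Fin N)) (ω : Fin N → ℕ → ℝ)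
    (w : Fin N → Fin N → ℝ) (Ns : Fin N → Finset (Fin N))
    (hNp : ∀ i, i ∉ Np i)
    (hdsymm : ∀ m i, d m i = d i m)
    (hNpsymm : ∀ m i : Fin N, m ∈ Np i ↔ i ∈ Np m)
    (q : ℝ)
    (p : ℝ) (hp : p = 1 + q)
    -- the key hypothesis, for every user i and assignment a
    (hkey : ∀ (a : Fin N → ℕ) (i : Fin N),
      q * privateUtility N (fun _ => P) d lam Np ω a Finset.univ i
        - p * ∑ m ∈ Np i, P * d m i ^ (-lam) * (if a i = a m then 1 else 0)
      ≤ ∑ n ∈ Ns i, w i n * privateUtility N (fun _ => P) d lam Np ω a Finset.univ n) :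
    ∀ (a : Fin N → ℕ) (i : Fin N),
      p * socialUtility N (fun _ => P) d lam Np ω a Finset.univ
        - p * socialUtility N (fun _ => P) d lam Np ω a (Finset.univ \ {i})
      ≤ privateUtility N (fun _ => P) d lam Np ω a Finset.univ i
        + ∑ n ∈ Ns i, w i n * privateUtility N (fun _ => P) d lam Np ω a Finset.univ n := by
  intro a i
  have hremove := socialUtility_sub_socialUtility_erase (fun _ => P) d lam Np ω a hNp hNpsymm
    hdsymm (mem_univ i)
  rw [inter_univ] at hremove
  rw [sdiff_singleton_eq_erase, ← mul_sub, hremove]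
  subst hp
  linarith [hkey a i]

/-- In the spectrum access game with equal transmit power `P` and symmetric
social ties, if for every user `i` and assignment `A`,
`∑_{n ∈ N_i^s} w i n * α n A ≥ (min_j ∑_{m ∈ N_j^s} w j m) * α i A
  - p * ∑_{m ∈ N_i^p} P * d m i ^ (-λ) * 1{a i = a m}`
where `p = min_j (1 + ∑_{m ∈ N_j^s} w j m)`, then the social-group utility
`η i A = α i A + ∑_{n ∈ N_i^s} w i n * α n A` satisfies
`η i A ≥ γ A - γ (A_{-i})` with `γ A = p * ∑ i, α i A`. -/
theorem spectrum_social_aware_assumption (N : ℕ) (P : ℝ) (d : Fin N → Fin N → ℝ)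
    (lam : ℝ) (Np : Fin N → Finset (Fin N)) (ω : Fin N → ℕ → ℝ)
    (w : Fin N → Fin N → ℝ) (Ns : Fin N → Finset (Fin N))
    (hP : 0 < P) (hd : ∀ m i, 0 < d m i) (hlam : 0 < lam)
    (hω : ∀ i c, 0 ≤ ω i c) (hNp : ∀ i, i ∉ Np i)
    (hdsymm : ∀ m i, d m i = d i m)
    (hNpsymm : ∀ m i : Fin N, m ∈ Np i ↔ i ∈ Np m)
    (hw01 : ∀ i n, 0 ≤ w i n ∧ w i n ≤ 1)
    (hwsymm : ∀ m n, w m n = w n m)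
    -- q = min_j ∑_{m ∈ N_j^s} w j m, and p = 1 + q
    (q : ℝ) (hq : IsLeast {x : ℝ | ∃ j : Fin N, x = ∑ m ∈ Ns j, w j m} q)
    (p : ℝ) (hp : p = 1 + q)
    -- the key hypothesis, for every user i and assignment a
    (hkey : ∀ (a : Fin N → ℕ) (i : Fin N),
      q * privateUtility N (fun _ => P) d lam Np ω a Finset.univ i
        - p * ∑ m ∈ Np i, P * d m i ^ (-lam) * (if a i = a m then 1 else 0)
      ≤ ∑ n ∈ Ns i, w i n * privateUtility N (fun _ => P) d lam Np ω a Finset.univ n) :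
    ∀ (a : Fin N → ℕ) (i : Fin N),
      p * socialUtility N (fun _ => P) d lam Np ω a Finset.univ
        - p * socialUtility N (fun _ => P) d lam Np ω a (Finset.univ \ {i})
      ≤ privateUtility N (fun _ => P) d lam Np ω a Finset.univ i
        + ∑ n ∈ Ns i, w i n * privateUtility N (fun _ => P) d lam Np ω a Finset.univ n :=
  spectrum_social_aware_assumption_general N P d lam Np ω w Ns hNp hdsymm hNpsymm q p hp hkey
end

section
/- (Vetta's 1/(1+c) bound, pure-strategy single-user version.) For a valid utility system (γ, {α_i}_{i=1}^N) with γ nondecreasing, submodular, γ(∅)=0, any (pure) Nash equilibrium X = (x_1,…,x_N) satisfies γ(X) ≥ γ(Ω)/(1+c), where c is the curvature of γ. -/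
/-!
Fix a Nash equilibrium `X` and an optimum `Ω`, and write `Rᵢ` for the acts of the users other
than `i`. Deviating to `σᵢ` does not pay, so by validity the marginal value of `σᵢ` over `Rᵢ` is at
most `αᵢ(X)`; summing these marginals and using submodularity together with `∑ αᵢ(X) ≤ γ(X)` gives
`γ(Ω ∪ X) ≤ 2 γ(X)`. On the other side, the curvature bounds the marginal value of each `xᵢ` over
`Ω ∪ Rᵢ` from below by `(1 - c) γ(xᵢ)`, and these marginals add up to at most `γ(Ω ∪ X) - γ(Ω)`,
so `γ(Ω) ≤ γ(Ω ∪ X) - (1 - c) γ(X) ≤ (1 + c) γ(X)`.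
-/

open Finset Function

section

variable {V : Type*} [DecidableEq V]

def Submodular (γ : Finset V → ℝ) : Prop :=
  ∀ A B : Finset V, γ (A ∪ B) + γ (A ∩ B) ≤ γ A + γ B

namespace Submodular

variable {γ : Finset V → ℝ}

theorem marginal_antitone (hsub : Submodular γ) (hmono : Monotone γ) {A B : Finset V}
    (hAB : A ⊆ B) (s : Finset V) : γ (B ∪ s) - γ B ≤ γ (A ∪ s) - γ A := by
  have h := hsub (A ∪ s) B
  rw [union_right_comm, union_eq_right.mpr hAB] at h
  have : γ A ≤ γ ((A ∪ s) ∩ B) := hmono (subset_inter subset_union_left hAB)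
  linarith

theorem marginal_le_self (hsub : Submodular γ) (hmono : Monotone γ) (h0 : γ ∅ = 0)
    (B s : Finset V) : γ (B ∪ s) - γ B ≤ γ s := by
  simpa [h0] using hsub.marginal_antitone hmono (empty_subset B) s

theorem one_sub_marginal_div_mem_Icc (hsub : Submodular γ) (hmono : Monotone γ)
    (h0 : γ ∅ = 0) (C : Finset V) {T t : Finset V} (ht : t ⊆ T) :
    1 - (γ (C ∪ T) - γ (C ∪ (T \ t))) / γ t ∈ Set.Icc 0 1 := by
  have hT : C ∪ T = C ∪ (T \ t) ∪ t := by rw [union_assoc, sdiff_union_of_subset ht]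
  have hγt : 0 ≤ γ t := h0 ▸ hmono (empty_subset t)
  have hnonneg : 0 ≤ (γ (C ∪ T) - γ (C ∪ (T \ t))) / γ t :=
    div_nonneg (sub_nonneg.mpr (hmono (union_subset_union_right sdiff_subset))) hγt
  have hle : (γ (C ∪ T) - γ (C ∪ (T \ t))) / γ t ≤ 1 :=
    div_le_one_of_le₀ (hT ▸ hsub.marginal_le_self hmono h0 _ t) hγt
  constructor <;> linarith

theorem marginal_biUnion_le_sum {ι : Type*} (hsub : Submodular γ) (hmono : Monotone γ)
    (B : Finset V) (s : Finset ι) (f : ι → Finset V) :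
    γ (B ∪ s.biUnion f) - γ B ≤ ∑ i ∈ s, (γ (B ∪ f i) - γ B) := by
  classical
  induction s using Finset.induction_on with
  | empty => simp
  | insert a s ha ih =>
    have h := hsub.marginal_antitone hmono (subset_union_left : B ⊆ B ∪ s.biUnion f) (f a)
    rw [biUnion_insert, sum_insert ha, union_comm (f a), ← union_assoc]
    linarith

theorem sum_marginal_erase_le {ι : Type*} [DecidableEq ι] (hsub : Submodular γ)
    (hmono : Monotone γ) (B : Finset V) (s : Finset ι) (f : ι → Finset V) :
    ∑ i ∈ s, (γ (B ∪ s.biUnion f) - γ (B ∪ (s.erase i).biUnion f))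
      ≤ γ (B ∪ s.biUnion f) - γ B := by
  induction s using Finset.induction_on with
  | empty => simp
  | insert a s ha ih =>
    have hterm : ∀ i ∈ s,
        γ (B ∪ (insert a s).biUnion f) - γ (B ∪ ((insert a s).erase i).biUnion f)
          ≤ γ (B ∪ s.biUnion f) - γ (B ∪ (s.erase i).biUnion f) := by
      intro i hi
      have h := hsub.marginal_antitone hmono
        (subset_union_left : B ∪ (s.erase i).biUnion f ⊆ _ ∪ f a) (s.biUnion f)
      rw [erase_insert_of_ne (ne_of_mem_of_not_mem hi ha).symm, biUnion_insert, biUnion_insert]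
      convert h using 3 <;> grind
    rw [sum_insert ha, erase_insert ha]
    linarith [sum_le_sum hterm]

end Submodular

theorem biUnion_update_eq {ι : Type*} [Fintype ι] [DecidableEq ι] (f : ι → Finset V) (i : ι)
    (a : Finset V) : univ.biUnion (update f i a) = (univ.erase i).biUnion f ∪ a := by
  rw [← insert_erase (mem_univ i), biUnion_insert, update_self, erase_insert (notMem_erase i _),
    union_comm]
  congr 1
  exact biUnion_congr rfl fun j hj => update_of_ne (ne_of_mem_erase hj) a f

section UtilitySystem

variable {ι : Type*} [Fintype ι] {γ : Finset V → ℝ} {𝒳 : ι → Set (Finset V)}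

variable (γ 𝒳) in
/-- The curvature of `γ` is the greatest element of `curvatureRatios γ 𝒳 Ω`. -/
def curvatureRatios (Ω : Finset V) : Set ℝ :=
  {r : ℝ | ∃ (i : ι) (t : ι → Finset V), (∀ j, t j ∈ 𝒳 j) ∧ γ (t i) ≠ 0 ∧
    r = 1 - (γ (Ω ∪ univ.biUnion t) - γ (Ω ∪ (univ.biUnion t \ t i))) / γ (t i)}

theorem curvatureRatios_subset_Icc (hsub : Submodular γ) (hmono : Monotone γ) (h0 : γ ∅ = 0)
    (Ω : Finset V) : curvatureRatios γ 𝒳 Ω ⊆ Set.Icc 0 1 := by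
  rintro _ ⟨i, t, -, -, rfl⟩
  exact hsub.one_sub_marginal_div_mem_Icc hmono h0 Ω (subset_biUnion_of_mem t (mem_univ i))

variable [DecidableEq ι]

theorem disjoint_biUnion_erase_of_mem
    (hdisj : ∀ i j : ι, i ≠ j → ∀ x ∈ 𝒳 i, ∀ y ∈ 𝒳 j, Disjoint x y)
    {x : ι → Finset V} (hx : ∀ i, x i ∈ 𝒳 i) {i : ι} {a : Finset V} (ha : a ∈ 𝒳 i) :
    Disjoint ((univ.erase i).biUnion x) a :=
  (disjoint_biUnion_left _ _ _).mpr fun j hj => hdisj j i (ne_of_mem_erase hj) _ (hx j) _ ha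

theorem marginal_le_utility_of_nash
    (hdisj : ∀ i j : ι, i ≠ j → ∀ x ∈ 𝒳 i, ∀ y ∈ 𝒳 j, Disjoint x y)
    {α : ι → (ι → Finset V) → ℝ}
    (hvalid : ∀ t : ι → Finset V, (∀ i, t i ∈ 𝒳 i) → ∀ i : ι,
      γ (univ.biUnion t) - γ (univ.biUnion t \ t i) ≤ α i t)
    {x : ι → Finset V} (hx : ∀ i, x i ∈ 𝒳 i)
    (hnash : ∀ i : ι, ∀ x' ∈ 𝒳 i, α i (update x i x') ≤ α i x) {i : ι} {a : Finset V}
    (ha : a ∈ 𝒳 i) :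
    γ ((univ.erase i).biUnion x ∪ a) - γ ((univ.erase i).biUnion x) ≤ α i x := by
  have hfeas : ∀ j, update x i a j ∈ 𝒳 j :=
    (forall_update_iff x fun j y => y ∈ 𝒳 j).mpr ⟨ha, fun j _ => hx j⟩
  have h := hvalid _ hfeas i
  rw [biUnion_update_eq, update_self,
    union_sdiff_cancel_right (disjoint_biUnion_erase_of_mem hdisj hx ha)] at h
  linarith [hnash i a ha]

theorem union_sub_le_of_nash (hsub : Submodular γ) (hmono : Monotone γ)
    (hdisj : ∀ i j : ι, i ≠ j → ∀ x ∈ 𝒳 i, ∀ y ∈ 𝒳 j, Disjoint x y)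
    {α : ι → (ι → Finset V) → ℝ}
    (hvalid1 : ∀ t : ι → Finset V, (∀ i, t i ∈ 𝒳 i) → ∀ i : ι,
      γ (univ.biUnion t) - γ (univ.biUnion t \ t i) ≤ α i t)
    (hvalid2 : ∀ t : ι → Finset V, (∀ i, t i ∈ 𝒳 i) → ∑ i, α i t ≤ γ (univ.biUnion t))
    {x σ : ι → Finset V} (hx : ∀ i, x i ∈ 𝒳 i) (hσ : ∀ i, σ i ∈ 𝒳 i)
    (hnash : ∀ i : ι, ∀ x' ∈ 𝒳 i, α i (update x i x') ≤ α i x) :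
    γ (univ.biUnion x ∪ univ.biUnion σ) - γ (univ.biUnion x) ≤ γ (univ.biUnion x) :=
  calc γ (univ.biUnion x ∪ univ.biUnion σ) - γ (univ.biUnion x)
      ≤ ∑ i, (γ (univ.biUnion x ∪ σ i) - γ (univ.biUnion x)) :=
        hsub.marginal_biUnion_le_sum hmono _ univ σ
    _ ≤ ∑ i, (γ ((univ.erase i).biUnion x ∪ σ i) - γ ((univ.erase i).biUnion x)) :=
        sum_le_sum fun i _ => hsub.marginal_antitone hmono
          (biUnion_subset_biUnion_of_subset_left x (subset_univ _)) (σ i)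
    _ ≤ ∑ i, α i x :=
        sum_le_sum fun i _ => marginal_le_utility_of_nash hdisj hvalid1 hx hnash (hσ i)
    _ ≤ γ (univ.biUnion x) := hvalid2 x hx

theorem one_sub_mul_le_marginal_of_mem_upperBounds (hmono : Monotone γ) (h0 : γ ∅ = 0)
    (hdisj : ∀ i j : ι, i ≠ j → ∀ x ∈ 𝒳 i, ∀ y ∈ 𝒳 j, Disjoint x y)
    {x : ι → Finset V} (hx : ∀ i, x i ∈ 𝒳 i) {Ω : Finset V} {c : ℝ}
    (hc : c ∈ upperBounds (curvatureRatios γ 𝒳 Ω)) (i : ι) :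
    (1 - c) * γ (x i) ≤ γ (Ω ∪ univ.biUnion x) - γ (Ω ∪ (univ.erase i).biUnion x) := by
  by_cases hγ : γ (x i) = 0
  · rw [hγ, mul_zero, sub_nonneg]
    exact hmono (union_subset_union_right
      (biUnion_subset_biUnion_of_subset_left x (subset_univ _)))
  have hpos : 0 < γ (x i) := (h0 ▸ hmono (empty_subset (x i))).lt_of_ne' hγ
  have hX : univ.biUnion x \ x i = (univ.erase i).biUnion x := by
    rw [← update_eq_self i x, biUnion_update_eq, update_self, update_eq_self,
      union_sdiff_cancel_right (disjoint_biUnion_erase_of_mem hdisj hx (hx i))]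
  have hle := hc ⟨i, x, hx, hγ, rfl⟩
  rw [hX] at hle
  exact (le_div_iff₀ hpos).mp (by linarith)

theorem one_sub_mul_le_union_sub (hsub : Submodular γ) (hmono : Monotone γ) (h0 : γ ∅ = 0)
    (hdisj : ∀ i j : ι, i ≠ j → ∀ x ∈ 𝒳 i, ∀ y ∈ 𝒳 j, Disjoint x y)
    {x : ι → Finset V} (hx : ∀ i, x i ∈ 𝒳 i) {Ω : Finset V} {c : ℝ}
    (hc : c ∈ upperBounds (curvatureRatios γ 𝒳 Ω)) (hc1 : c ≤ 1) :
    (1 - c) * γ (univ.biUnion x) ≤ γ (Ω ∪ univ.biUnion x) - γ Ω :=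
  calc (1 - c) * γ (univ.biUnion x)
      ≤ (1 - c) * ∑ i, γ (x i) := by
        gcongr
        simpa [h0] using hsub.marginal_biUnion_le_sum hmono ∅ univ x
    _ = ∑ i, (1 - c) * γ (x i) := mul_sum _ _ _
    _ ≤ ∑ i, (γ (Ω ∪ univ.biUnion x) - γ (Ω ∪ (univ.erase i).biUnion x)) :=
        sum_le_sum fun i _ => one_sub_mul_le_marginal_of_mem_upperBounds hmono h0 hdisj hx hc i
    _ ≤ γ (Ω ∪ univ.biUnion x) - γ Ω := hsub.sum_marginal_erase_le hmono Ω univ x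

end UtilitySystem

end

theorem nash_curvature_bound_general {V : Type*} [DecidableEq V]
    (γ : Finset V → ℝ)
    (hsub : ∀ A B : Finset V, γ (A ∪ B) + γ (A ∩ B) ≤ γ A + γ B)
    (hmono : ∀ A B : Finset V, A ⊆ B → γ A ≤ γ B)
    (h0 : γ ∅ = 0)
    (N : ℕ) (𝒳 : Fin N → Set (Finset V))
    -- actions of distinct users come from disjoint ground sets
    (hdisj : ∀ i j : Fin N, i ≠ j → ∀ x ∈ 𝒳 i, ∀ y ∈ 𝒳 j, Disjoint x y)
    (α : Fin N → (Fin N → Finset V) → ℝ)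
    -- validity
    (hvalid1 : ∀ t : Fin N → Finset V, (∀ i, t i ∈ 𝒳 i) → ∀ i : Fin N,
      γ (Finset.univ.biUnion t) - γ (Finset.univ.biUnion t \ t i) ≤ α i t)
    (hvalid2 : ∀ t : Fin N → Finset V, (∀ i, t i ∈ 𝒳 i) →
      ∑ i : Fin N, α i t ≤ γ (Finset.univ.biUnion t))
    (x σ : Fin N → Finset V)
    (hx : ∀ i, x i ∈ 𝒳 i) (hσ : ∀ i, σ i ∈ 𝒳 i)
    -- x is a pure Nash equilibrium
    (hnash : ∀ i : Fin N, ∀ x' ∈ 𝒳 i, α i (Function.update x i x') ≤ α i x)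
    -- c is the curvature of γ
    (c : ℝ)
    (hc : IsGreatest {r : ℝ | ∃ (i : Fin N) (t : Fin N → Finset V),
      (∀ j, t j ∈ 𝒳 j) ∧ γ (t i) ≠ 0 ∧
      r = 1 - (γ (Finset.univ.biUnion σ ∪ Finset.univ.biUnion t)
        - γ (Finset.univ.biUnion σ ∪ (Finset.univ.biUnion t \ t i))) / γ (t i)} c) :
    γ (Finset.univ.biUnion σ) / (1 + c) ≤ γ (Finset.univ.biUnion x) := by
  have hsub' : Submodular γ := hsub
  have hmono' : Monotone γ := fun A B h => hmono A B h
  obtain ⟨hc_mem, hc_ub⟩ : IsGreatest (curvatureRatios γ 𝒳 (univ.biUnion σ)) c := hc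
  obtain ⟨hc0, hc1⟩ := curvatureRatios_subset_Icc hsub' hmono' h0 _ hc_mem
  have hnash_le := union_sub_le_of_nash hsub' hmono' hdisj hvalid1 hvalid2 hx hσ hnash
  have hcurv_le := one_sub_mul_le_union_sub hsub' hmono' h0 hdisj hx hc_ub hc1
  rw [union_comm] at hnash_le
  rw [div_le_iff₀ (by linarith)]
  linarith

/-- Vetta's `1/(1+c)` bound, pure-strategy single-user version: for a valid
utility system `(γ, {α i})` with `γ` nondecreasing, submodular and `γ ∅ = 0`,
any pure Nash equilibrium `x` satisfies `γ X ≥ γ Ω / (1 + c)`, where `c` is the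
curvature of `γ`. -/
theorem nash_curvature_bound {V : Type*} [DecidableEq V]
    (γ : Finset V → ℝ)
    (hsub : ∀ A B : Finset V, γ (A ∪ B) + γ (A ∩ B) ≤ γ A + γ B)
    (hmono : ∀ A B : Finset V, A ⊆ B → γ A ≤ γ B)
    (h0 : γ ∅ = 0)
    (N : ℕ) (𝒳 : Fin N → Set (Finset V))
    -- actions of distinct users come from disjoint ground sets
    (hdisj : ∀ i j : Fin N, i ≠ j → ∀ x ∈ 𝒳 i, ∀ y ∈ 𝒳 j, Disjoint x y)
    (α : Fin N → (Fin N → Finset V) → ℝ)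
    -- validity
    (hvalid1 : ∀ t : Fin N → Finset V, (∀ i, t i ∈ 𝒳 i) → ∀ i : Fin N,
      γ (Finset.univ.biUnion t) - γ (Finset.univ.biUnion t \ t i) ≤ α i t)
    (hvalid2 : ∀ t : Fin N → Finset V, (∀ i, t i ∈ 𝒳 i) →
      ∑ i : Fin N, α i t ≤ γ (Finset.univ.biUnion t))
    (x σ : Fin N → Finset V)
    (hx : ∀ i, x i ∈ 𝒳 i) (hσ : ∀ i, σ i ∈ 𝒳 i)
    -- Ω = ∪ σ i maximizes γ over feasible action profiles
    (hopt : ∀ t : Fin N → Finset V, (∀ i, t i ∈ 𝒳 i) →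
      γ (Finset.univ.biUnion t) ≤ γ (Finset.univ.biUnion σ))
    -- x is a pure Nash equilibrium
    (hnash : ∀ i : Fin N, ∀ x' ∈ 𝒳 i, α i (Function.update x i x') ≤ α i x)
    -- c is the curvature of γ
    (c : ℝ)
    (hc : IsGreatest {r : ℝ | ∃ (i : Fin N) (t : Fin N → Finset V),
      (∀ j, t j ∈ 𝒳 j) ∧ γ (t i) ≠ 0 ∧
      r = 1 - (γ (Finset.univ.biUnion σ ∪ Finset.univ.biUnion t)
        - γ (Finset.univ.biUnion σ ∪ (Finset.univ.biUnion t \ t i))) / γ (t i)} c) :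
    γ (Finset.univ.biUnion σ) / (1 + c) ≤ γ (Finset.univ.biUnion x) :=
  nash_curvature_bound_general γ hsub hmono h0 N 𝒳 hdisj α hvalid1 hvalid2 x σ hx hσ hnash c hc
end
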